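/- For μ ∈ M_{μ₀} and μ' ∈ M_{μ₀} with everywhere positive associated policy, the divergence Γ(μ,μ') satisfies the Pinsker-type bound Γ(μ,μ') ≥ (1/2) ‖μ − μ'‖²_{∞,1}, where ‖μ − μ'‖_{∞,1} := sup_{0 ≤ n ≤ N} ‖μ_n − μ'_n‖₁. Consequently, ψ is 1-strongly convex on M_{μ₀} with respect to the norm ‖·‖_{∞,1}. -/

import Mathlib

open Finset

noncomputable section

variable {X A : Type*} [Fintype X] [Fintype A]

def IsDist {Y : Type*} [Fintype Y] (η : Y → ℝ) : Prop :=
  (∀ y, 0 ≤ η y) ∧ ∑ y, η y = 1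

/-- Occupancy measures: `occ μ0 p π n` is the state-action distribution `μ_n^{π,p}`. -/
def occ (μ0 : X × A → ℝ) (p : ℕ → X → A → X → ℝ) (π : ℕ → X → A → ℝ) :
    ℕ → X × A → ℝ
  | 0 => μ0
  | n + 1 => fun y =>
      (∑ x, ∑ a, occ μ0 p π n (x, a) * p (n + 1) x a y.1) * π (n + 1) y.1 y.2

/-!
Pinsker's inequality for finite distributions comes from the pointwise bound
`a log (a / b) ≥ (a - b) + (3/2) (a - b)² / (a + 2b)` and Cauchy–Schwarz with the weights `a + 2b`,
whose total mass is 3.  The KL divergence of the `n`-th occupancy measures is then bounded by the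
policy terms up to step `n`: the occupancy measure at step `n + 1` is the state marginal (the
previous occupancy measure pushed through the transition kernel) composed with the policy, so the
chain rule splits its KL divergence into that of the state marginals, which is at most that of the
previous occupancy measures by the log-sum inequality, plus the policy term.  The policy terms are
nonnegative, so the sum up to `n ≤ N` is at most the sum up to `N`.
-/

section ScalarPinsker

open Set

def pinskerGap (t : ℝ) : ℝ := t * Real.log t - (t - 1) - 3 / 2 * ((t - 1) ^ 2 / (t + 2))

def pinskerGapDeriv (t : ℝ) : ℝ := Real.log t - 3 / 2 * ((t - 1) * (t + 5) / (t + 2) ^ 2)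

lemma hasDerivAt_pinskerGap {t : ℝ} (ht : 0 < t) :
    HasDerivAt pinskerGap (pinskerGapDeriv t) t := by
  have h2 : t + 2 ≠ 0 := by linarith
  convert! ((Real.hasDerivAt_mul_log ht.ne').sub ((hasDerivAt_id t).sub_const 1)).sub
    (((((hasDerivAt_id t).sub_const 1).pow 2).div ((hasDerivAt_id t).add_const 2) h2).const_mul
      (3 / 2 : ℝ)) using 1
  simp only [pinskerGapDeriv, id_eq, Pi.pow_apply]
  field_simp
  ring

lemma hasDerivAt_pinskerGapDeriv {t : ℝ} (ht : 0 < t) :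
    HasDerivAt pinskerGapDeriv ((t - 1) ^ 2 * (t + 8) / (t * (t + 2) ^ 3)) t := by
  have h2 : (t + 2) ^ 2 ≠ 0 := by positivity
  convert! (Real.hasDerivAt_log ht.ne').sub
    (((((hasDerivAt_id t).sub_const 1).mul ((hasDerivAt_id t).add_const 5)).div
      (((hasDerivAt_id t).add_const 2).pow 2) h2).const_mul (3 / 2 : ℝ)) using 1
  simp only [id_eq, Pi.pow_apply, Pi.mul_apply]
  field_simp
  ring

lemma monotoneOn_pinskerGapDeriv : MonotoneOn pinskerGapDeriv (Ioi 0) := by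
  refine monotoneOn_of_hasDerivWithinAt_nonneg (convex_Ioi 0)
    (fun x hx => (hasDerivAt_pinskerGapDeriv hx).continuousAt.continuousWithinAt)
    (fun x hx => (hasDerivAt_pinskerGapDeriv (interior_subset hx)).hasDerivWithinAt)
    fun x hx => ?_
  have hx : 0 < x := interior_subset hx
  have : 0 ≤ x + 8 := by linarith
  positivity

lemma le_of_hasDerivAt_of_sign_change {f f' : ℝ → ℝ} {c t : ℝ} (hf : ContinuousOn f (Ici 0))
    (hf' : ∀ x, 0 < x → HasDerivAt f (f' x) x) (hle : ∀ x, 0 < x → x ≤ c → f' x ≤ 0)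
    (hge : ∀ x, c ≤ x → 0 ≤ f' x) (hc : 0 ≤ c) (ht : 0 ≤ t) : f c ≤ f t := by
  rcases le_total t c with htc | hct
  · refine antitoneOn_of_hasDerivWithinAt_nonpos (f' := f') (convex_Icc 0 c)
      (hf.mono Icc_subset_Ici_self) (fun x hx => ?_) (fun x hx => ?_) ⟨ht, htc⟩ ⟨hc, le_rfl⟩ htc
    all_goals rw [interior_Icc] at hx
    · exact (hf' x hx.1).hasDerivWithinAt
    · exact hle x hx.1 hx.2.le
  · refine monotoneOn_of_hasDerivWithinAt_nonneg (f' := f') (convex_Ici c)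
      (hf.mono (Ici_subset_Ici.2 hc)) (fun x hx => ?_) (fun x hx => ?_) self_mem_Ici hct hct
    all_goals rw [interior_Ici] at hx
    · exact (hf' x (hc.trans_lt hx)).hasDerivWithinAt
    · exact hge x hx.le

lemma pinskerGap_nonneg {t : ℝ} (ht : 0 ≤ t) : 0 ≤ pinskerGap t := by
  have hcont : ContinuousOn pinskerGap (Ici 0) :=
    (Real.continuous_mul_log.continuousOn.sub (by fun_prop)).sub
      (continuousOn_const.mul ((by fun_prop : Continuous fun t : ℝ => (t - 1) ^ 2).continuousOn.div
        (by fun_prop) fun x hx => by simp only [Set.mem_Ici] at hx; linarith))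
  have h1 : (1 : ℝ) ∈ Set.Ioi 0 := Set.mem_Ioi.2 one_pos
  have hG1 : pinskerGapDeriv 1 = 0 := by simp [pinskerGapDeriv]
  have := le_of_hasDerivAt_of_sign_change hcont (fun x hx => hasDerivAt_pinskerGap hx)
    (fun x hx hx1 => hG1 ▸ monotoneOn_pinskerGapDeriv hx h1 hx1)
    (fun x hx => hG1 ▸ monotoneOn_pinskerGapDeriv h1 (one_pos.trans_le hx) hx) zero_le_one ht
  simpa [pinskerGap] using this

lemma sub_add_sq_div_le_mul_log_div {a b : ℝ} (ha : 0 ≤ a) (hb : 0 ≤ b) (hab : b = 0 → a = 0) :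
    a - b + 3 / 2 * ((a - b) ^ 2 / (a + 2 * b)) ≤ a * Real.log (a / b) := by
  rcases hb.eq_or_lt with rfl | hb
  · simp [hab rfl]
  have key := mul_nonneg hb.le (pinskerGap_nonneg (div_nonneg ha hb.le))
  have h2 : a + 2 * b ≠ 0 := by positivity
  have h2' : a / b + 2 ≠ 0 := by positivity
  rw [pinskerGap] at key
  field_simp at key ⊢
  linarith

end ScalarPinsker

section FiniteKL

variable {Y Z : Type*}

def kl [Fintype Y] (η ζ : Y → ℝ) : ℝ := ∑ y, η y * Real.log (η y / ζ y)

def AbsCont (η ζ : Y → ℝ) : Prop := ∀ y, ζ y = 0 → η y = 0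

def kernelPush [Fintype Y] (μ : Y → ℝ) (P : Y → Z → ℝ) : Z → ℝ := fun z => ∑ y, μ y * P y z

def compProd (ν : Y → ℝ) (κ : Y → Z → ℝ) : Y × Z → ℝ := fun w => ν w.1 * κ w.1 w.2

lemma kernelPush_apply [Fintype Y] (μ : Y → ℝ) (P : Y → Z → ℝ) (z : Z) :
    kernelPush μ P z = ∑ y, μ y * P y z := rfl

lemma compProd_apply (ν : Y → ℝ) (κ : Y → Z → ℝ) (y : Y) (z : Z) :
    compProd ν κ (y, z) = ν y * κ y z := rfl

lemma IsDist.kernelPush [Fintype Y] [Fintype Z] {μ : Y → ℝ} {P : Y → Z → ℝ} (hμ : IsDist μ)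
    (hP : ∀ y, IsDist (P y)) : IsDist (kernelPush μ P) := by
  refine ⟨fun z => sum_nonneg fun y _ => mul_nonneg (hμ.1 y) ((hP y).1 z), ?_⟩
  simp only [kernelPush_apply]
  rw [sum_comm]
  simp only [← mul_sum, (hP _).2, mul_one, hμ.2]

lemma IsDist.compProd [Fintype Y] [Fintype Z] {ν : Y → ℝ} {κ : Y → Z → ℝ} (hν : IsDist ν)
    (hκ : ∀ y, IsDist (κ y)) : IsDist (compProd ν κ) := by
  refine ⟨fun w => mul_nonneg (hν.1 _) ((hκ _).1 _), ?_⟩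
  simp only [Fintype.sum_prod_type, compProd_apply, ← mul_sum, (hκ _).2, mul_one, hν.2]

lemma AbsCont.kernelPush [Fintype Y] {μ μ' : Y → ℝ} {P : Y → Z → ℝ} (hac : AbsCont μ μ')
    (hμ' : ∀ y, 0 ≤ μ' y) (hP : ∀ y z, 0 ≤ P y z) :
    AbsCont (kernelPush μ P) (kernelPush μ' P) := fun z h => sum_eq_zero fun y _ => by
  have := (sum_eq_zero_iff_of_nonneg fun y _ => mul_nonneg (hμ' y) (hP y z)).1 h y (mem_univ y)
  rcases mul_eq_zero.1 this with h | h <;> simp [h, hac y]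

lemma AbsCont.compProd {ν ν' : Y → ℝ} {κ κ' : Y → Z → ℝ}
    (hν : AbsCont ν ν') (hκ : ∀ y, AbsCont (κ y) (κ' y)) :
    AbsCont (compProd ν κ) (compProd ν' κ') := by
  rintro ⟨y, z⟩ h
  rw [compProd_apply] at h ⊢
  rcases mul_eq_zero.1 h with h | h
  · rw [hν y h, zero_mul]
  · rw [hκ y z h, mul_zero]

lemma kl_self [Fintype Y] (η : Y → ℝ) : kl η η = 0 :=
  sum_eq_zero fun y _ => by by_cases h : η y = 0 <;> simp [h]

theorem pinsker [Fintype Y] {η ζ : Y → ℝ} (hη : IsDist η) (hζ : IsDist ζ) (hac : AbsCont η ζ) :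
    1 / 2 * (∑ y, |η y - ζ y|) ^ 2 ≤ kl η ζ := by
  set S := ∑ y, (η y - ζ y) ^ 2 / (η y + 2 * ζ y)
  have hS : 3 / 2 * S ≤ kl η ζ := by
    have h := sum_le_sum fun y (_ : y ∈ univ) =>
      sub_add_sq_div_le_mul_log_div (hη.1 y) (hζ.1 y) (hac y)
    rwa [sum_add_distrib, sum_sub_distrib, ← mul_sum, hη.2, hζ.2, sub_self, zero_add] at h
  have hCS : (∑ y, |η y - ζ y|) ^ 2 ≤ S * ∑ y, (η y + 2 * ζ y) := by
    have hw : ∀ y, 0 ≤ η y + 2 * ζ y := fun y => by linarith [hη.1 y, hζ.1 y]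
    refine sum_sq_le_sum_mul_sum_of_sq_le_mul _ (fun y _ => div_nonneg (sq_nonneg _) (hw y))
      (fun y _ => hw y) fun y _ => (sq_abs _).trans_le (div_mul_cancel_of_imp fun h => ?_).ge
    have : η y = 0 ∧ ζ y = 0 := by constructor <;> linarith [hη.1 y, hζ.1 y]
    simp [this]
  rw [sum_add_distrib, ← mul_sum, hη.2, hζ.2] at hCS
  linarith

lemma kl_nonneg [Fintype Y] {η ζ : Y → ℝ} (hη : IsDist η) (hζ : IsDist ζ) (hac : AbsCont η ζ) :
    0 ≤ kl η ζ :=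
  (mul_nonneg (by norm_num) (sq_nonneg _)).trans (pinsker hη hζ hac)

theorem log_sum_le [Fintype Y] {a b : Y → ℝ} (ha : ∀ y, 0 ≤ a y) (hb : ∀ y, 0 ≤ b y)
    (hab : AbsCont a b) :
    (∑ y, a y) * Real.log ((∑ y, a y) / ∑ y, b y) ≤ ∑ y, a y * Real.log (a y / b y) := by
  set B := ∑ y, b y
  rcases (sum_nonneg fun y _ => hb y : 0 ≤ B).eq_or_lt with hB | hB
  · have hb0 := (sum_eq_zero_iff_of_nonneg fun y _ => hb y).1 hB.symm
    simp [fun y => hab y (hb0 y (mem_univ y))]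
  -- Jensen for `x ↦ x log x` at the points `a y / b y` with weights `b y / B`
  have hJ := Real.convexOn_mul_log.map_sum_le (t := univ) (w := fun y => b y / B)
    (p := fun y => a y / b y) (fun y _ => div_nonneg (hb y) hB.le)
    (by rw [← sum_div, div_self hB.ne']) (fun y _ => div_nonneg (ha y) (hb y))
  have hw : ∀ y, b y / B * (a y / b y) = a y / B := fun y => by
    rw [div_mul_eq_mul_div, mul_div_cancel_of_imp' (hab y)]
  have hw' : ∀ y, b y / B * (a y / b y * Real.log (a y / b y)) =
      a y * Real.log (a y / b y) / B := fun y => by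
    rw [← mul_assoc, hw, div_mul_eq_mul_div]
  simp only [smul_eq_mul, hw, hw', ← sum_div] at hJ
  rwa [div_mul_eq_mul_div, div_le_div_iff_of_pos_right hB] at hJ

theorem kl_kernelPush_le [Fintype Y] [Fintype Z] {μ μ' : Y → ℝ} {P : Y → Z → ℝ} (hμ : ∀ y, 0 ≤ μ y)
    (hμ' : ∀ y, 0 ≤ μ' y) (hP : ∀ y, IsDist (P y)) (hac : AbsCont μ μ') :
    kl (kernelPush μ P) (kernelPush μ' P) ≤ kl μ μ' := by
  have hsplit : ∀ y z, μ y * P y z * Real.log (μ y * P y z / (μ' y * P y z)) =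
      μ y * Real.log (μ y / μ' y) * P y z := fun y z => by
    by_cases h : P y z = 0
    · simp [h]
    · rw [mul_div_mul_right _ _ h]
      ring
  calc kl (kernelPush μ P) (kernelPush μ' P)
      ≤ ∑ z, ∑ y, μ y * P y z * Real.log (μ y * P y z / (μ' y * P y z)) :=
        sum_le_sum fun z _ => log_sum_le (fun y => mul_nonneg (hμ y) ((hP y).1 z))
          (fun y => mul_nonneg (hμ' y) ((hP y).1 z))
          fun y h => by rcases mul_eq_zero.1 h with h | h <;> simp [h, hac y]
    _ = kl μ μ' := by
        rw [sum_comm]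
        simp only [hsplit, ← mul_sum, (hP _).2, mul_one, kl]

theorem kl_compProd [Fintype Y] [Fintype Z] {ν ν' : Y → ℝ} {κ κ' : Y → Z → ℝ}
    (hν : AbsCont ν ν') (hκ : ∀ y, AbsCont (κ y) (κ' y)) (hκ1 : ∀ y, ∑ z, κ y z = 1) :
    kl (compProd ν κ) (compProd ν' κ') =
      kl ν ν' + ∑ y, ∑ z, compProd ν κ (y, z) * Real.log (κ y z / κ' y z) := by
  have hsplit : ∀ y z, ν y * κ y z * Real.log (ν y * κ y z / (ν' y * κ' y z)) =
      ν y * Real.log (ν y / ν' y) * κ y z + ν y * κ y z * Real.log (κ y z / κ' y z) := by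
    intro y z
    by_cases h : ν y * κ y z = 0
    · rcases mul_eq_zero.1 h with h | h <;> simp [h]
    obtain ⟨hν0, hκ0⟩ := mul_ne_zero_iff.1 h
    rw [← div_mul_div_comm, Real.log_mul (div_ne_zero hν0 (mt (hν y) hν0))
      (div_ne_zero hκ0 (mt (hκ y z) hκ0))]
    ring
  simp only [kl, compProd_apply, Fintype.sum_prod_type, hsplit, sum_add_distrib, ← mul_sum, hκ1,
    mul_one]

end FiniteKL

section Occupancy

variable {μ0 : X × A → ℝ} {p : ℕ → X → A → X → ℝ} {π π' : ℕ → X → A → ℝ}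

lemma occ_succ (n : ℕ) : occ μ0 p π (n + 1) =
    compProd (kernelPush (occ μ0 p π n) fun z => p (n + 1) z.1 z.2) (π (n + 1)) := by
  funext y
  rw [compProd, kernelPush_apply, Fintype.sum_prod_type]
  rfl

lemma isDist_occ (hμ0 : IsDist μ0) (hp : ∀ n x a, IsDist (p n x a)) (hπ : ∀ n x, IsDist (π n x))
    (n : ℕ) : IsDist (occ μ0 p π n) := by
  induction n with
  | zero => exact hμ0
  | succ n ih =>
    rw [occ_succ]
    exact (ih.kernelPush fun z => hp _ _ _).compProd (hπ _)

lemma absCont_occ (hμ0 : IsDist μ0) (hp : ∀ n x a, IsDist (p n x a)) (hπ' : ∀ n x, IsDist (π' n x))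
    (hpos : ∀ n x a, 0 < π' n x a) (n : ℕ) : AbsCont (occ μ0 p π n) (occ μ0 p π' n) := by
  induction n with
  | zero => exact fun _ => id
  | succ n ih =>
    rw [occ_succ, occ_succ]
    exact (ih.kernelPush (isDist_occ hμ0 hp hπ' n).1 fun z => (hp _ _ _).1).compProd
      fun x a h => absurd h (hpos _ _ _).ne'

lemma kl_occ_succ_le (hμ0 : IsDist μ0) (hp : ∀ n x a, IsDist (p n x a))
    (hπ : ∀ n x, IsDist (π n x)) (hπ' : ∀ n x, IsDist (π' n x)) (hpos : ∀ n x a, 0 < π' n x a)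
    (n : ℕ) :
    kl (occ μ0 p π (n + 1)) (occ μ0 p π' (n + 1)) ≤ kl (occ μ0 p π n) (occ μ0 p π' n) +
      ∑ x, ∑ a, occ μ0 p π (n + 1) (x, a) * Real.log (π (n + 1) x a / π' (n + 1) x a) := by
  have hac := absCont_occ (π := π) hμ0 hp hπ' hpos n
  rw [occ_succ, occ_succ, kl_compProd (hac.kernelPush (isDist_occ hμ0 hp hπ' n).1
    fun z => (hp _ _ _).1) (fun x a h => absurd h (hpos _ _ _).ne') fun x => (hπ _ x).2]
  gcongr
  exact kl_kernelPush_le (isDist_occ hμ0 hp hπ n).1 (isDist_occ hμ0 hp hπ' n).1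
    (fun z => hp _ _ _) hac

lemma sum_occ_mul_log_nonneg (hμ0 : IsDist μ0) (hp : ∀ n x a, IsDist (p n x a))
    (hπ : ∀ n x, IsDist (π n x)) (hπ' : ∀ n x, IsDist (π' n x)) (hpos : ∀ n x a, 0 < π' n x a)
    {m : ℕ} (hm : 1 ≤ m) :
    0 ≤ ∑ x, ∑ a, occ μ0 p π m (x, a) * Real.log (π m x a / π' m x a) := by
  obtain ⟨n, rfl⟩ := Nat.exists_eq_add_of_le' hm
  rw [occ_succ]
  refine sum_nonneg fun x _ => ?_
  simp only [compProd_apply, mul_assoc, ← mul_sum]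
  exact mul_nonneg (((isDist_occ hμ0 hp hπ n).kernelPush fun z => hp _ _ _).1 x)
    (kl_nonneg (hπ _ x) (hπ' _ x) fun a h => absurd h (hpos _ _ _).ne')

lemma kl_occ_le_sum (hμ0 : IsDist μ0) (hp : ∀ n x a, IsDist (p n x a))
    (hπ : ∀ n x, IsDist (π n x)) (hπ' : ∀ n x, IsDist (π' n x)) (hpos : ∀ n x a, 0 < π' n x a)
    (n : ℕ) :
    kl (occ μ0 p π n) (occ μ0 p π' n) ≤
      ∑ m ∈ Icc 1 n, ∑ x, ∑ a, occ μ0 p π m (x, a) * Real.log (π m x a / π' m x a) := by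
  induction n with
  | zero => simp [occ, kl_self]
  | succ n ih =>
    rw [sum_Icc_succ_top (Nat.le_add_left 1 n)]
    linarith [kl_occ_succ_le hμ0 hp hπ hπ' hpos n]

end Occupancy

theorem gamma_ge_half_sq_sup_l1_general (N : ℕ)
    (μ0 : X × A → ℝ) (hμ0 : IsDist μ0)
    (p : ℕ → X → A → X → ℝ) (hp : ∀ n x a, IsDist (p n x a))
    (π π' : ℕ → X → A → ℝ)
    (hπ : ∀ n x, IsDist (π n x)) (hπ' : ∀ n x, IsDist (π' n x))
    (hpos : ∀ n x a, 0 < π' n x a)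
    (n : ℕ) (hn : n ≤ N) :
    (1 / 2) * (∑ y : X × A, |occ μ0 p π n y - occ μ0 p π' n y|) ^ 2 ≤
      ∑ m ∈ Icc 1 N, ∑ x, ∑ a,
        occ μ0 p π m (x, a) * Real.log (π m x a / π' m x a) := by
  calc _ ≤ kl (occ μ0 p π n) (occ μ0 p π' n) :=
      pinsker (isDist_occ hμ0 hp hπ n) (isDist_occ hμ0 hp hπ' n) (absCont_occ hμ0 hp hπ' hpos n)
    _ ≤ ∑ m ∈ Icc 1 n, ∑ x, ∑ a, occ μ0 p π m (x, a) * Real.log (π m x a / π' m x a) :=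
      kl_occ_le_sum hμ0 hp hπ hπ' hpos n
    _ ≤ _ := sum_le_sum_of_subset_of_nonneg (Icc_subset_Icc_right hn) fun _ hm _ =>
      sum_occ_mul_log_nonneg hμ0 hp hπ hπ' hpos (mem_Icc.1 hm).1

/-- Pinsker-type bound: `Γ(μ^π, μ^{π'}) ≥ (1/2) ‖μ^π − μ^{π'}‖²_{∞,1}`, i.e. the divergence
dominates half the squared L1 distance at every step `0 ≤ n ≤ N` (so also the squared sup).
This expresses the 1-strong convexity of `ψ` w.r.t. `‖·‖_{∞,1}` on `M_{μ0}`. -/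
theorem gamma_ge_half_sq_sup_l1 (N : ℕ) (hN : 1 ≤ N)
    (μ0 : X × A → ℝ) (hμ0 : IsDist μ0)
    (p : ℕ → X → A → X → ℝ) (hp : ∀ n x a, IsDist (p n x a))
    (π π' : ℕ → X → A → ℝ)
    (hπ : ∀ n x, IsDist (π n x)) (hπ' : ∀ n x, IsDist (π' n x))
    (hpos : ∀ n x a, 0 < π' n x a)
    (n : ℕ) (hn : n ≤ N) :
    (1 / 2) * (∑ y : X × A, |occ μ0 p π n y - occ μ0 p π' n y|) ^ 2 ≤
      ∑ m ∈ Icc 1 N, ∑ x, ∑ a,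
        occ μ0 p π m (x, a) * Real.log (π m x a / π' m x a) :=
  gamma_ge_half_sq_sup_l1_general N μ0 hμ0 p hp π π' hπ hπ' hpos n hn
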